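/- arXiv:0911.2408 — 2 statements merged into one kernel-verified Lean document; each statement's English description precedes it below -/
import Mathlib

section
/- Let σ be the shift permutation of ℤ and fix n ≥ 1. The set of tuples (τ₁,…,τₙ) ∈ Sym(ℤ)ⁿ such that σ,τ₁,…,τₙ freely generate a free subgroup of Sym(ℤ) of rank n+1 is residual (a countable intersection of dense open sets) in Sym(ℤ)ⁿ. -/
noncomputable section

/-- The topology of pointwise convergence on the symmetric group of `ℤ`:
induced from the product topology on `ℤ → ℤ` (with `ℤ` discrete). -/
instance permTop : TopologicalSpace (Equiv.Perm ℤ) :=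
  TopologicalSpace.induced (fun π : Equiv.Perm ℤ => (π : ℤ → ℤ)) Pi.topologicalSpace

/-- The shift permutation `a ↦ a + 1` of `ℤ`. -/
def shift : Equiv.Perm ℤ := Equiv.addRight 1

/-- The orbit of `a : ℤ` under the cyclic group generated by `γ`. -/
def permOrbit (γ : Equiv.Perm ℤ) (a : ℤ) : Set ℤ := {b | ∃ k : ℤ, (γ ^ k) a = b}

/-- Evaluation of a word on `n + 1` letters at `(σ, τ₁, …, τₙ)`, where the letter `0`
is sent to the shift `σ`. -/
def evalWord {n : ℕ} (τ : Fin n → Equiv.Perm ℤ) : FreeGroup (Fin (n + 1)) →* Equiv.Perm ℤ :=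
  FreeGroup.lift (Fin.cons shift τ)


/-!
Each set `{τ | w(σ, τ) ≠ 1}` with `w ≠ 1` is open, because `Sym(ℤ)` is a Hausdorff topological
group, and dense: a basic neighbourhood only prescribes the values of the `τⱼ` on a finite set.
Starting from a point `a₀` far to the right of these values, read the reduced word `w` letter by
letter. A `σ`-letter moves by `±1`; a `τ`-letter that is not yet determined at the current point is
sent to a fresh point far to the right, and the finite partial data extends to honest permutations
by composing with a transposition. Reducedness guarantees that the path never has to retrace the
edge it has just created, so `w(σ, τ)` moves `a₀`. Injectivity is the countable intersection of
these dense open sets over `w ≠ 1`.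
-/

open Filter Topology Equiv

theorem Continuous.apply_of_discreteTopology {X Y Z : Type*} [TopologicalSpace X]
    [TopologicalSpace Y] [DiscreteTopology Y] [TopologicalSpace Z] {F : X → Y → Z} {g : X → Y}
    (hF : ∀ y, Continuous (F · y)) (hg : Continuous g) : Continuous fun x => F x (g x) := by
  refine continuous_iff_continuousAt.2 fun x => (hF (g x)).continuousAt.congr ?_
  filter_upwards [hg.continuousAt (isOpen_discrete {g x} |>.mem_nhds rfl)] with x' hx'
  rw [Set.mem_singleton_iff.1 hx']

theorem continuous_perm_apply (a : ℤ) : Continuous fun π : Perm ℤ => π a :=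
  (continuous_apply a).comp continuous_induced_dom

instance : ContinuousMul (Perm ℤ) :=
  ⟨continuous_induced_rng.2 <| continuous_pi fun a =>
    Continuous.apply_of_discreteTopology (F := fun p : Perm ℤ × Perm ℤ => p.1)
      (fun b => (continuous_perm_apply b).comp continuous_fst)
      ((continuous_perm_apply a).comp continuous_snd)⟩

instance : ContinuousInv (Perm ℤ) :=
  ⟨continuous_induced_rng.2 <| continuous_pi fun a => continuous_discrete_rng.2 fun b => by
    have : (fun π : Perm ℤ => π⁻¹ a) ⁻¹' {b} = (fun π : Perm ℤ => π b) ⁻¹' {a} := by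
      ext π; exact Perm.inv_eq_iff_eq.trans eq_comm
    exact this ▸ (isOpen_discrete {a}).preimage (continuous_perm_apply b)⟩

instance : IsTopologicalGroup (Perm ℤ) where

instance : T2Space (Perm ℤ) :=
  .of_injective_continuous DFunLike.coe_injective continuous_induced_dom

theorem continuous_evalWord {n : ℕ} (w : FreeGroup (Fin (n + 1))) :
    Continuous fun τ : Fin n → Perm ℤ => evalWord τ w := by
  induction w using FreeGroup.induction_on with
  | C1 => simpa using continuous_const
  | of i =>
    exact (continuous_apply i).comp
      (continuous_const.finCons (A := fun _ => Perm ℤ) (f := fun _ => shift) continuous_id)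
  | inv_of i h => simp only [map_inv]; exact h.inv
  | mul x y hx hy => simp only [map_mul]; exact hx.mul hy

theorem isOpen_setOf_evalWord_ne_one {n : ℕ} (w : FreeGroup (Fin (n + 1))) :
    IsOpen {τ : Fin n → Perm ℤ | evalWord τ w ≠ 1} :=
  isOpen_ne_fun (continuous_evalWord w) continuous_const

theorem Equiv.Perm.exists_finset_subset_of_mem_nhds {π : Perm ℤ} {U : Set (Perm ℤ)}
    (hU : U ∈ 𝓝 π) :
    ∃ A : Finset ℤ, {π' | ∀ x ∈ A, π' x = π x} ⊆ U := by
  rw [nhds_induced, mem_comap] at hU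
  obtain ⟨V, hV, hVU⟩ := hU
  rw [nhds_pi, mem_pi'] at hV
  obtain ⟨A, t, ht, hAt⟩ := hV
  refine ⟨A, fun π' hπ' => hVU (hAt fun x hx => ?_)⟩
  simpa [hπ' x hx] using mem_of_mem_nhds (ht x)

theorem exists_finset_subset_of_mem_nhds {n : ℕ} {τ : Fin n → Perm ℤ}
    {U : Set (Fin n → Perm ℤ)} (hU : U ∈ 𝓝 τ) :
    ∃ A : Finset ℤ, {τ' | ∀ j, ∀ x ∈ A, τ' j x = τ j x} ⊆ U := by
  rw [nhds_pi, mem_pi'] at hU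
  obtain ⟨I, t, ht, hIt⟩ := hU
  choose A hA using fun j => Perm.exists_finset_subset_of_mem_nhds (ht j)
  refine ⟨Finset.univ.biUnion A, fun τ' hτ' => hIt fun j _ => hA j fun x hx => ?_⟩
  exact hτ' j x (Finset.mem_biUnion.2 ⟨j, Finset.mem_univ j, hx⟩)

section PartialPermutations

variable {ι α : Type*}

def Realizes (τ : ι → Perm α) (E : Finset (ι × α × α)) : Prop :=
  ∀ e ∈ E, τ e.1 e.2.1 = e.2.2

theorem Realizes.mono {τ : ι → Perm α} {E E' : Finset (ι × α × α)} (h : Realizes τ E)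
    (hE : E' ⊆ E) : Realizes τ E' :=
  fun e he => h e (hE he)

def letterEdge (j : ι) (s : Bool) (x y : α) : ι × α × α :=
  (j, bif s then (x, y) else (y, x))

def IsFree (E : Finset (ι × α × α)) (j : ι) (s : Bool) (x : α) : Prop :=
  ∀ y, letterEdge j s x y ∉ E

theorem Realizes.apply_letterEdge {τ : ι → Perm α} {E : Finset (ι × α × α)}
    (h : Realizes τ E) {j : ι} {s : Bool} {x y : α} (hE : letterEdge j s x y ∈ E) :
    (bif s then τ j else (τ j)⁻¹) x = y := by
  cases s
  · exact Perm.inv_eq_iff_eq.2 (h _ hE).symm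
  · exact h _ hE

variable [DecidableEq α]

def endpoints (E : Finset (ι × α × α)) : Finset α :=
  E.image (·.2.1) ∪ E.image (·.2.2)

theorem endpoints_insert [DecidableEq ι] (E : Finset (ι × α × α)) (j : ι) (x y : α) :
    endpoints (insert (j, x, y) E) = insert x (insert y (endpoints E)) := by
  ext z
  simp only [endpoints, Finset.image_insert, Finset.mem_union, Finset.mem_insert]
  tauto

theorem isFree_of_notMem_endpoints {E : Finset (ι × α × α)} {x : α} (hx : x ∉ endpoints E)
    (j : ι) (s : Bool) : IsFree E j s x := by
  intro y hy
  cases s <;> exact hx (by simp only [endpoints, Finset.mem_union, Finset.mem_image]; aesop)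

theorem Realizes.exists_insert [DecidableEq ι] {τ : ι → Perm α} {E : Finset (ι × α × α)}
    (h : Realizes τ E) {j : ι} {x y : α} (hx : ∀ z, (j, x, z) ∉ E) (hy : ∀ z, (j, z, y) ∉ E) :
    ∃ τ', Realizes τ' (insert (j, x, y) E) := by
  refine ⟨Function.update τ j (swap (τ j x) y * τ j), ?_⟩
  rintro ⟨k, z, w⟩ hmem
  rcases Finset.mem_insert.1 hmem with hnew | hk
  · simp_all
  rcases eq_or_ne k j with rfl | hkj
  · have hzw : τ k z = w := h (k, z, w) hk
    have hwx : w ≠ τ k x := by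
      rintro rfl
      exact hx _ ((τ k).injective hzw ▸ hk)
    have hwy : w ≠ y := by
      rintro rfl
      exact hy z hk
    simp [hzw, swap_apply_of_ne_of_ne hwx hwy]
  · simpa [Function.update_of_ne hkj] using h _ hk

theorem Realizes.exists_insert_letterEdge [DecidableEq ι] {τ : ι → Perm α}
    {E : Finset (ι × α × α)} (h : Realizes τ E) {j : ι} {s : Bool} {x y : α}
    (hx : IsFree E j s x) (hy : y ∉ endpoints E) :
    ∃ τ', Realizes τ' (insert (letterEdge j s x y) E) := by
  have hy' := isFree_of_notMem_endpoints hy j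
  cases s
  · exact h.exists_insert (hy' true) (hx ·)
  · exact h.exists_insert (hx ·) (hy' false)

theorem isFree_insert_letterEdge [DecidableEq ι] {E : Finset (ι × α × α)} {j j' : ι}
    {s s' : Bool} {x y : α} (hy : y ∉ endpoints E) (hxy : x ≠ y) (hj : (j', s') ≠ (j, !s)) :
    IsFree (insert (letterEdge j s x y) E) j' s' y := by
  intro z hz
  rcases Finset.mem_insert.1 hz with hz | hz
  · cases s <;> cases s' <;> simp_all [letterEdge]
  · exact isFree_of_notMem_endpoints hy j' s' z hz

end PartialPermutations

theorem Finset.exists_add_lt (F : Finset ℤ) (N : ℕ) : ∃ c, ∀ x ∈ F, x + N < c := by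
  obtain ⟨M, hM⟩ := F.exists_le
  exact ⟨M + N + 1, fun x hx => by have := hM x hx; omega⟩

section Trace

variable {n : ℕ}

def boolSign (s : Bool) : ℤ := bif s then 1 else -1

theorem evalWord_mk_cons_zero_apply (τ : Fin n → Perm ℤ) (s : Bool)
    (L : List (Fin (n + 1) × Bool)) (a : ℤ) :
    evalWord τ (FreeGroup.mk ((0, s) :: L)) a = evalWord τ (FreeGroup.mk L) a + boolSign s := by
  cases s <;> simp [evalWord, FreeGroup.lift_mk, shift, boolSign]

theorem evalWord_mk_cons_succ_apply (τ : Fin n → Perm ℤ) (j : Fin n) (s : Bool)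
    (L : List (Fin (n + 1) × Bool)) (a : ℤ) :
    evalWord τ (FreeGroup.mk ((j.succ, s) :: L)) a =
      (bif s then τ j else (τ j)⁻¹) (evalWord τ (FreeGroup.mk L) a) := by
  cases s <;> simp [evalWord, FreeGroup.lift_mk]

/-- Reading the word `L` from right to left, starting at `a₀`, every tuple realizing the partial
data `E` sends `a₀` to `b`. The anchor `e` is the point reached by the last `τ`-letter (or `a₀`);
every other point involved in `E` lies more than `N` below it. Since a run of `σ`-letters moves
monotonically away from `e`, the point `b` is free for any next `τ`-letter that does not cancel
the last letter of the word. -/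
structure IsTrace (N : ℕ) (a₀ : ℤ) (L : List (Fin (n + 1) × Bool))
    (E : Finset (Fin n × ℤ × ℤ)) (b e : ℤ) : Prop where
  realizable : ∃ τ, Realizes τ E
  evalWord_eq : ∀ τ, Realizes τ E → evalWord τ (FreeGroup.mk L) a₀ = b
  far : ∀ x ∈ insert a₀ (endpoints E), x = e ∨ x + N < e
  head_shift : ∀ s, L.head? = some (0, s) →
    ∃ k : ℕ, 0 < k ∧ k ≤ L.length ∧ b = e + k * boolSign s
  head_not_shift : (∀ s, L.head? ≠ some (0, s)) →
    b = e ∧ ∀ j s, L.head? ≠ some (j.succ, !s) → IsFree E j s e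
  ne_start : L ≠ [] → b ≠ a₀

variable {N : ℕ} {a₀ b e : ℤ} {L : List (Fin (n + 1) × Bool)} {E : Finset (Fin n × ℤ × ℤ)}

theorem IsTrace.cons_zero (h : IsTrace N a₀ L E b e) {s : Bool}
    (hred : ∀ s', L.head? = some (0, s') → s' = s) (hN : L.length < N) :
    IsTrace N a₀ ((0, s) :: L) E (b + boolSign s) e := by
  obtain ⟨k, hk0, hkL, hk⟩ : ∃ k : ℕ, 0 < k ∧ k ≤ L.length + 1 ∧
      b + boolSign s = e + k * boolSign s := by
    by_cases hL : L.head? = some (0, s)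
    · obtain ⟨k, hk0, hkL, rfl⟩ := h.head_shift s hL
      exact ⟨k + 1, by omega, by omega, by push_cast; ring⟩
    · obtain ⟨rfl, -⟩ := h.head_not_shift fun s' hs' => hL (hred s' hs' ▸ hs')
      exact ⟨1, one_pos, by omega, by simp⟩
  refine ⟨h.realizable, fun τ hτ => ?_, h.far, ?_, by simp, fun _ => ?_⟩
  · rw [evalWord_mk_cons_zero_apply, h.evalWord_eq τ hτ]
  · rintro s' ⟨⟩
    exact ⟨k, hk0, hkL, hk⟩
  · rw [hk]
    rcases h.far a₀ (Finset.mem_insert_self _ _) with rfl | ha <;>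
      cases s <;> simp only [boolSign, cond] <;> omega

theorem IsTrace.cons_succ (h : IsTrace N a₀ L E b e) {j : Fin n} {s : Bool}
    (hred : L.head? ≠ some (j.succ, !s)) (hN : L.length < N) :
    ∃ E' c, E ⊆ E' ∧ IsTrace N a₀ ((j.succ, s) :: L) E' c c := by
  obtain ⟨c, hc⟩ := (insert a₀ (insert b (endpoints E))).exists_add_lt N
  have hb : IsFree E j s b := by
    by_cases hσ : ∃ s', L.head? = some (0, s')
    · obtain ⟨s', hs'⟩ := hσ
      obtain ⟨k, hk0, hkL, rfl⟩ := h.head_shift s' hs'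
      refine isFree_of_notMem_endpoints (fun hmem => ?_) j s
      rcases h.far _ (Finset.mem_insert_of_mem hmem) with h1 | h1 <;>
        cases s' <;> simp only [boolSign, cond] at h1 <;> omega
    · push Not at hσ
      obtain ⟨rfl, hfree⟩ := h.head_not_shift hσ
      exact hfree j s hred
  have hcE : c ∉ endpoints E := fun hmem => by
    have := hc c (by simp [hmem])
    omega
  have hbc : b ≠ c := by
    have := hc b (by simp)
    omega
  obtain ⟨τ, hτ⟩ := h.realizable
  refine ⟨_, c, Finset.subset_insert (letterEdge j s b c) E, hτ.exists_insert_letterEdge hb hcE,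
    fun τ' hτ' => ?_, fun x hx => ?_, by simp, fun _ => ⟨rfl, fun j' s' hj' => ?_⟩, fun _ => ?_⟩
  · rw [evalWord_mk_cons_succ_apply, h.evalWord_eq τ' (hτ'.mono (Finset.subset_insert _ _))]
    exact hτ'.apply_letterEdge (Finset.mem_insert_self _ _)
  · rcases eq_or_ne x c with hxc | hxc
    · exact Or.inl hxc
    · refine Or.inr (hc x ?_)
      cases s <;>
        simp only [letterEdge, cond, endpoints_insert, Finset.mem_insert] at hx ⊢ <;> tauto
  · refine isFree_insert_letterEdge hcE hbc fun hjs => hj' ?_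
    obtain ⟨rfl, rfl⟩ := Prod.mk.inj hjs
    simp
  · have := hc a₀ (by simp)
    omega

theorem exists_isTrace {E₀ : Finset (Fin n × ℤ × ℤ)}
    (h₀ : ∃ τ, Realizes τ E₀) (ha₀ : ∀ x ∈ endpoints E₀, x + N < a₀) :
    ∀ L : List (Fin (n + 1) × Bool), FreeGroup.IsReduced L → L.length ≤ N →
      ∃ E b e, E₀ ⊆ E ∧ IsTrace N a₀ L E b e
  | [], _, _ => ⟨E₀, a₀, a₀, subset_rfl, h₀,
      fun _ _ => by rw [← FreeGroup.one_eq_mk, map_one, Perm.one_apply],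
      fun x hx => (Finset.mem_insert.1 hx).imp_right (ha₀ x), by simp,
      fun _ => ⟨rfl, fun j s _ => isFree_of_notMem_endpoints (fun h => by
        have := ha₀ a₀ h; omega) j s⟩, by simp⟩
  | (i, s) :: L, hred, hN => by
    obtain ⟨hhead, hL⟩ := List.isChain_cons.1 hred
    obtain ⟨E, b, e, hE, h⟩ := exists_isTrace h₀ ha₀ L hL (by simp at hN; omega)
    have hN' : L.length < N := by simp at hN; omega
    rcases Fin.eq_zero_or_eq_succ i with rfl | ⟨j, rfl⟩
    · exact ⟨E, _, e, hE, h.cons_zero (fun s' hs' => (hhead _ hs' rfl).symm) hN'⟩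
    · obtain ⟨E', c, hEE', h'⟩ :=
        h.cons_succ (s := s) (fun hs' => by simpa using hhead _ hs' rfl) hN'
      exact ⟨E', c, c, hE.trans hEE', h'⟩

end Trace

theorem dense_setOf_evalWord_ne_one {n : ℕ} {w : FreeGroup (Fin (n + 1))} (hw : w ≠ 1) :
    Dense {τ : Fin n → Perm ℤ | evalWord τ w ≠ 1} := by
  refine fun τ => mem_closure_iff_nhds.2 fun U hU => ?_
  obtain ⟨A, hA⟩ := exists_finset_subset_of_mem_nhds hU
  let E₀ : Finset (Fin n × ℤ × ℤ) := (Finset.univ ×ˢ A).image fun p => (p.1, p.2, τ p.1 p.2)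
  have hτ : Realizes τ E₀ := by
    simp only [Realizes, E₀, Finset.mem_image]
    rintro _ ⟨p, -, rfl⟩
    rfl
  obtain ⟨a₀, ha₀⟩ := (endpoints E₀).exists_add_lt w.toWord.length
  obtain ⟨E, b, e, hE, h⟩ :=
    exists_isTrace ⟨τ, hτ⟩ ha₀ _ FreeGroup.isReduced_toWord le_rfl
  obtain ⟨τ', hτ'⟩ := h.realizable
  refine ⟨τ', hA fun j x hx => hτ'.mono hE _
    (Finset.mem_image_of_mem _ (Finset.mk_mem_product (Finset.mem_univ j) hx)),
    fun h1 => h.ne_start (FreeGroup.toWord_eq_nil_iff.not.2 hw) ?_⟩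
  rw [← h.evalWord_eq τ' hτ', FreeGroup.mk_toWord, h1, Perm.one_apply]

theorem stmt_8_general (n : ℕ) :
    {τ : Fin n → Equiv.Perm ℤ | Function.Injective (evalWord τ)} ∈
      residual (Fin n → Equiv.Perm ℤ) := by
  have hw : ∀ w : {w : FreeGroup (Fin (n + 1)) // w ≠ 1},
      {τ : Fin n → Perm ℤ | evalWord τ w ≠ 1} ∈ residual _ := fun w =>
    residual_of_dense_open (isOpen_setOf_evalWord_ne_one w.1) (dense_setOf_evalWord_ne_one w.2)
  filter_upwards [countable_iInter_mem.2 hw] with τ hτ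
  refine (injective_iff_map_eq_one _).2 fun w h1 => of_not_not fun hne => ?_
  exact Set.mem_iInter.1 hτ ⟨w, hne⟩ h1

/-- the set of tuples `(τ₁, …, τₙ)` such that `σ, τ₁, …, τₙ` freely generate a
free subgroup of rank `n + 1` is residual. -/
theorem stmt_8 (n : ℕ) (hn : 1 ≤ n) :
    {τ : Fin n → Equiv.Perm ℤ | Function.Injective (evalWord τ)} ∈
      residual (Fin n → Equiv.Perm ℤ) :=
  stmt_8_general n
end
end

section
/- If φ and ψ are permutations of ℤ such that both cyclic subgroups ⟨φ⟩ and ⟨ψ⟩ are non-discrete in Sym(ℤ), then the cyclic subgroup generated by (φ,ψ) in Sym(ℤ) × Sym(ℤ) is non-discrete. -/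
noncomputable section

/-!
If `⟨g⟩` is not discrete in a group with a basis of open subgroups at `1`, every open subgroup
contains a nontrivial power of `g`. Given open subgroups `U` and `V`, pick nontrivial `g ^ m ∈ U`
and `k ^ n ∈ V`; then `(g, k) ^ (m * n) ∈ U × V`, and it is nontrivial because a non-discrete
cyclic subgroup of a T1 group is infinite. `Sym(ℤ)` is such a group: the pointwise stabilisers of
finite sets form a basis of open subgroups at the identity.
-/

open Filter Topology Subgroup

section DiscreteCyclicSubgroup

variable {G K : Type*} [Group G] [TopologicalSpace G] [Group K] [TopologicalSpace K]

theorem Subgroup.discreteTopology_iff_exists_mem_nhds_one [IsTopologicalGroup G]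
    {H : Subgroup G} : DiscreteTopology H ↔ ∃ U ∈ 𝓝 (1 : G), ∀ x ∈ H, x ∈ U → x = 1 := by
  rw [discreteTopology_iff_isOpen_singleton_one, isOpen_iff_mem_nhds]
  simp only [Set.mem_singleton_iff, forall_eq]
  rw [mem_nhds_subtype]
  simp [Set.subset_def]

theorem not_discreteTopology_zpowers_iff [IsTopologicalGroup G] {g : G} :
    ¬ DiscreteTopology (zpowers g) ↔ ∀ U ∈ 𝓝 (1 : G), ∃ n : ℤ, g ^ n ≠ 1 ∧ g ^ n ∈ U := by
  simp only [discreteTopology_iff_exists_mem_nhds_one, mem_zpowers_iff, forall_exists_index,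
    forall_apply_eq_imp_iff]
  push Not
  simp only [and_comm]

theorem zpow_ne_one_of_not_discreteTopology_zpowers [T1Space G] {g : G}
    (hg : ¬ DiscreteTopology (zpowers g)) {n : ℤ} (hn : n ≠ 0) : g ^ n ≠ 1 := by
  intro h
  have : Finite (zpowers g) :=
    (finite_zpowers.2 (isOfFinOrder_iff_zpow_eq_one.2 ⟨n, hn, h⟩)).to_subtype
  exact hg inferInstance

theorem not_discreteTopology_zpowers_prod [NonarchimedeanGroup G] [T1Space G]
    [NonarchimedeanGroup K] {g : G} {k : K} (hg : ¬ DiscreteTopology (zpowers g))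
    (hk : ¬ DiscreteTopology (zpowers k)) : ¬ DiscreteTopology (zpowers (g, k)) := by
  rw [not_discreteTopology_zpowers_iff]
  intro W hW
  obtain ⟨U, V, hUV⟩ := NonarchimedeanGroup.prod_subset hW
  obtain ⟨m, hm, hmU⟩ := not_discreteTopology_zpowers_iff.1 hg U U.mem_nhds_one
  obtain ⟨n, hn, hnV⟩ := not_discreteTopology_zpowers_iff.1 hk V V.mem_nhds_one
  have hmn : m * n ≠ 0 := mul_ne_zero (by rintro rfl; simp at hm) (by rintro rfl; simp at hn)
  refine ⟨m * n, fun h => zpow_ne_one_of_not_discreteTopology_zpowers hg hmn ?_, hUV ⟨?_, ?_⟩⟩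
  · simpa using congrArg Prod.fst h
  · simpa [zpow_mul] using U.zpow_mem hmU n
  · simpa [zpow_mul'] using V.zpow_mem hnV m

end DiscreteCyclicSubgroup

section FixingSubgroup

variable {M X : Type*} [Group M] [TopologicalSpace M] [MulAction M X] [TopologicalSpace X]
  [DiscreteTopology X] [ContinuousSMul M X]

theorem isOpen_fixingSubgroup_of_finite {s : Set X} (hs : s.Finite) :
    IsOpen (fixingSubgroup M s : Set M) := by
  have : (fixingSubgroup M s : Set M) = ⋂ x ∈ s, (MulAction.stabilizer M x : Set M) := by
    ext; simp [mem_fixingSubgroup_iff]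
  exact this ▸ hs.isOpen_biInter fun x _ => stabilizer_isOpen M x

end FixingSubgroup

namespace Equiv.Perm

theorem isEmbedding_coeFn : Topology.IsEmbedding (fun π : Perm ℤ => (π : ℤ → ℤ)) :=
  ⟨⟨rfl⟩, DFunLike.coe_injective⟩

instance : T2Space (Perm ℤ) := isEmbedding_coeFn.t2Space

instance : ContinuousSMul (Perm ℤ) ℤ :=
  ⟨continuous_prod_of_discrete_right.2 fun a =>
    (continuous_apply a).comp isEmbedding_coeFn.continuous⟩

instance : IsTopologicalGroup (Perm ℤ) where
  continuous_mul := continuous_induced_rng.2 <| continuous_pi fun a =>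
    show Continuous fun p : Perm ℤ × Perm ℤ => p.1 • p.2 • a by fun_prop
  continuous_inv := continuous_induced_rng.2 <| continuous_pi fun a =>
    continuous_discrete_rng.2 fun b => by
      have : IsOpen {π : Perm ℤ | π • b = a} :=
        (isOpen_discrete {a}).preimage (continuous_id.smul continuous_const)
      convert this using 1
      ext π
      exact π.symm_apply_eq.trans eq_comm

theorem exists_finset_fixingSubgroup_subset_of_mem_nhds_one {U : Set (Perm ℤ)} (hU : U ∈ 𝓝 1) :
    ∃ s : Finset ℤ, (fixingSubgroup (Perm ℤ) (s : Set ℤ) : Set (Perm ℤ)) ⊆ U := by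
  rw [nhds_induced, mem_comap, nhds_pi] at hU
  obtain ⟨t, ht, htU⟩ := hU
  obtain ⟨s, u, hu, hsu⟩ := mem_pi'.1 ht
  refine ⟨s, fun π hπ => htU (hsu fun a ha => ?_)⟩
  have hπa : π a = a := (mem_fixingSubgroup_iff _).1 hπ a ha
  simpa [hπa] using mem_of_mem_nhds (hu a)

instance : NonarchimedeanGroup (Perm ℤ) where
  is_nonarchimedean _ hU :=
    let ⟨s, hs⟩ := exists_finset_fixingSubgroup_subset_of_mem_nhds_one hU
    ⟨⟨fixingSubgroup (Perm ℤ) (s : Set ℤ), isOpen_fixingSubgroup_of_finite s.finite_toSet⟩, hs⟩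

end Equiv.Perm

/-- if `⟨φ⟩` and `⟨ψ⟩` are both non-discrete in `Sym ℤ`, then `⟨(φ, ψ)⟩` is
non-discrete in `Sym ℤ × Sym ℤ`. -/
theorem stmt_15 (φ ψ : Equiv.Perm ℤ)
    (hφ : ¬ DiscreteTopology (Subgroup.zpowers φ))
    (hψ : ¬ DiscreteTopology (Subgroup.zpowers ψ)) :
    ¬ DiscreteTopology (Subgroup.zpowers ((φ, ψ) : Equiv.Perm ℤ × Equiv.Perm ℤ)) :=
  not_discreteTopology_zpowers_prod hφ hψ
end
end
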